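/- Lebesgue differentiation theorem on K: for f ∈ L^1_loc(K, μ), for μ-almost every x ∈ K, (1/μ(K_{i_n}(x))) ∫_{K_{i_n}(x)} f dμ → f(x) as n → ∞, and moreover (1/μ(K_{i_n}(x))) ∫_{K_{i_n}(x)} |f(y) − f(x)| dμ(y) → 0. -/

import Mathlib

/-!
Strong separation makes the address of a point of `K` unique, so the generation-`n` basic cubes
together with `Kᶜ` partition space, and the average of `f` over the cube containing `x` is the
conditional expectation of `f` given the `n`-th partition; cubes have positive measure because
self-similarity gives `μ (S i '' A) ≥ p i * μ A`. The partitions refine each other, so Lévy's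
upward theorem gives a.e. convergence of the averages to `𝔼[f | ⨆ n, ℱ n]`. Cube diameters shrink
geometrically, so every relatively open subset of `K` is a countable union of cubes; as
`μ Kᶜ = 0`, `f` is a.e. equal to a `⨆ n, ℱ n`-measurable function, and the limit is `f` itself.
The oscillation statement follows by applying this to `|f - q|` for every rational `q`.
-/

open MeasureTheory Set Filter
open scoped ENNReal NNReal Topology

noncomputable section

abbrev Pt (d : ℕ) := EuclideanSpace ℝ (Fin d)

/-- An iterated function system of contractive similitudes on ℝ^d with attractor `K`
satisfying the strong separation condition. -/
structure IFS (d m : ℕ) where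
  S : Fin m → Pt d → Pt d
  r : Fin m → ℝ
  r_pos : ∀ i, 0 < r i
  r_lt_one : ∀ i, r i < 1
  similitude : ∀ i x y, dist (S i x) (S i y) = r i * dist x y
  K : Set (Pt d)
  K_nonempty : K.Nonempty
  K_compact : IsCompact K
  K_invariant : K = ⋃ i, S i '' K
  ssc : Pairwise fun i j => Disjoint (S i '' K) (S j '' K)

namespace IFS

variable {d m : ℕ}

/-- The composition `S_{i₁} ∘ ⋯ ∘ S_{iₙ}` for the word `w = i₁ ⋯ iₙ`. -/
def cylMap (Φ : IFS d m) (w : List (Fin m)) : Pt d → Pt d :=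
  w.foldr (fun i g => Φ.S i ∘ g) id

/-- The basic cube (cylinder set) `K_w = S_{i₁} ∘ ⋯ ∘ S_{iₙ}(K)`. -/
def cyl (Φ : IFS d m) (w : List (Fin m)) : Set (Pt d) :=
  Φ.cylMap w '' Φ.K

/-- `μ` is the self-similar probability measure associated with the probability
vector `p` (with all `p i > 0`), i.e. `μ = ∑ i, p i • μ ∘ S i ⁻¹`, supported on `K`. -/
def SelfSimilar (Φ : IFS d m) (p : Fin m → ℝ≥0∞) (μ : Measure (Pt d)) : Prop :=
  (∑ i, p i = 1) ∧ (∀ i, 0 < p i) ∧ IsProbabilityMeasure μ ∧ μ Φ.K = 1 ∧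
    μ = ∑ i, p i • μ.map (Φ.S i)

/-- The α-dimensional Hausdorff content on `K` associated with `μ`, defined via
coverings by countable families of basic cubes; `s` is the Hausdorff dimension of `K`. -/
def hContent (Φ : IFS d m) (μ : Measure (Pt d)) (s α : ℝ) (E : Set (Pt d)) : ℝ≥0∞ :=
  ⨅ (C : Set (List (Fin m))) (_ : C.Countable) (_ : E ⊆ ⋃ w ∈ C, Φ.cyl w),
    ∑' w : C, μ (Φ.cyl w.1) ^ (α / s)

/-- The dyadic-type Hardy–Littlewood maximal operator over basic cubes containing `x`. -/
def maxOp (Φ : IFS d m) (μ : Measure (Pt d)) (f : Pt d → ℝ) (x : Pt d) : ℝ≥0∞ :=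
  ⨆ (w : List (Fin m)) (_ : x ∈ Φ.cyl w),
    (μ (Φ.cyl w))⁻¹ * ∫⁻ y in Φ.cyl w, ENNReal.ofReal |f y| ∂μ

end IFS

/-- The Choquet integral of `g` over `E` with respect to the monotone set function `ν`. -/
def choquetInt {X : Type*} (ν : Set X → ℝ≥0∞) (E : Set X) (g : X → ℝ≥0∞) : ℝ≥0∞ :=
  ∫⁻ t in Set.Ioi (0 : ℝ), ν {x ∈ E | ENNReal.ofReal t < g x}

/-- `log⁺ t = max (0, log t)`. -/
def posLog (t : ℝ) : ℝ := max 0 (Real.log t)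

lemma measurable_indicator_of_measurableSet_inter {α β : Type*} [Zero β] [MeasurableSpace β]
    {m m₀ : MeasurableSpace α} {s : Set α} (hs : MeasurableSet[m] s)
    (hinter : ∀ t, MeasurableSet[m₀] t → MeasurableSet[m] (t ∩ s)) {g : α → β}
    (hg : Measurable[m₀] g) : Measurable[m] (s.indicator g) := by
  classical
  intro B hB
  rw [indicator_preimage, Set.ite, Pi.zero_def, preimage_const]
  refine (hinter _ (hg hB)).union ?_
  split_ifs
  · exact (@MeasurableSet.univ _ m).diff hs
  · exact (@MeasurableSet.empty _ m).diff hs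

section Average

variable {α ι : Type*} [MeasurableSpace α]

lemma average_abs_sub_le {ν : Measure α} [IsFiniteMeasure ν] {f : α → ℝ} (hf : Integrable f ν)
    (a b : ℝ) : ⨍ y, |f y - a| ∂ν ≤ ⨍ y, |f y - b| ∂ν + |b - a| := by
  rcases eq_zero_or_neZero ν with rfl | _
  · simp
  have hfb : Integrable (fun y => |f y - b|) ν := (hf.sub (integrable_const b)).abs
  calc ⨍ y, |f y - a| ∂ν ≤ ⨍ y, (|f y - b| + |b - a|) ∂ν := by
        simp only [average_eq, smul_eq_mul]
        exact mul_le_mul_of_nonneg_left (integral_mono (hf.sub (integrable_const a)).abs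
          (hfb.add (integrable_const _)) fun y => abs_sub_le _ _ _) (by positivity)
    _ = ⨍ y, |f y - b| ∂ν + |b - a| := by
        rw [average_eq, integral_add hfb (integrable_const _), smul_add, ← average_eq,
          ← average_eq, average_const]

lemma tendsto_average_abs_sub_of_forall_rat {l : Filter ι} {ν : ι → Measure α}
    [∀ i, IsFiniteMeasure (ν i)] {f : α → ℝ} (hf : ∀ i, Integrable f (ν i)) {c : ℝ}
    (h : ∀ q : ℚ, Tendsto (fun i => ⨍ y, |f y - q| ∂ν i) l (𝓝 |c - q|)) :
    Tendsto (fun i => ⨍ y, |f y - c| ∂ν i) l (𝓝 0) := by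
  refine tendsto_order.2 ⟨fun a ha => .of_forall fun i => ha.trans_le ?_, fun ε hε => ?_⟩
  · simp only [average_eq, smul_eq_mul]
    exact mul_nonneg (inv_nonneg.2 ENNReal.toReal_nonneg) (integral_nonneg fun _ => abs_nonneg _)
  obtain ⟨q, hq⟩ := exists_rat_near c (by positivity : 0 < ε / 3)
  filter_upwards [(h q).eventually_lt_const (by linarith : |c - q| < 2 * ε / 3)] with i hi
  calc ⨍ y, |f y - c| ∂ν i ≤ ⨍ y, |f y - q| ∂ν i + |(q : ℝ) - c| := average_abs_sub_le (hf i) c q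
    _ < 2 * ε / 3 + ε / 3 := add_lt_add hi (by rwa [abs_sub_comm])
    _ = ε := by ring

end Average

namespace IFS

variable {d m : ℕ} (Φ : IFS d m)

lemma lipschitzWith_S {i : Fin m} {ρ : ℝ≥0} (hρ : Φ.r i ≤ ρ) : LipschitzWith ρ (Φ.S i) :=
  LipschitzWith.of_dist_le_mul fun x y => by
    rw [Φ.similitude]
    exact mul_le_mul_of_nonneg_right hρ dist_nonneg

lemma continuous_S (i : Fin m) : Continuous (Φ.S i) :=
  (Φ.lipschitzWith_S (Real.le_coe_toNNReal (Φ.r i))).continuous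

lemma S_injective (i : Fin m) : Function.Injective (Φ.S i) := fun x y h => by
  have h' := Φ.similitude i x y
  rw [h, dist_self, eq_comm, mul_eq_zero] at h'
  exact dist_eq_zero.1 (h'.resolve_left (Φ.r_pos i).ne')

lemma exists_lt_one_forall_r_le : ∃ ρ : ℝ≥0, ρ < 1 ∧ ∀ i, Φ.r i ≤ ρ :=
  ⟨Finset.univ.sup fun i => (Φ.r i).toNNReal,
    (Finset.sup_lt_iff one_pos).2 fun i _ => Real.toNNReal_lt_one.2 (Φ.r_lt_one i),
    fun i => Real.toNNReal_le_iff_le_coe.1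
      (Finset.le_sup (f := fun i => (Φ.r i).toNNReal) (Finset.mem_univ i))⟩

lemma S_image_K_subset (i : Fin m) : Φ.S i '' Φ.K ⊆ Φ.K :=
  (subset_iUnion (fun j => Φ.S j '' Φ.K) i).trans_eq Φ.K_invariant.symm

@[simp] lemma cyl_nil : Φ.cyl [] = Φ.K := image_id _

lemma cyl_cons (i : Fin m) (w : List (Fin m)) : Φ.cyl (i :: w) = Φ.S i '' Φ.cyl w :=
  image_comp (Φ.S i) (Φ.cylMap w) Φ.K

lemma cyl_subset_K (w : List (Fin m)) : Φ.cyl w ⊆ Φ.K := by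
  induction w with
  | nil => simp
  | cons i w ih => rw [cyl_cons]; exact (image_mono ih).trans (Φ.S_image_K_subset i)

lemma isCompact_cyl (w : List (Fin m)) : IsCompact (Φ.cyl w) := by
  induction w with
  | nil => simpa using Φ.K_compact
  | cons i w ih => rw [cyl_cons]; exact ih.image (Φ.continuous_S i)

lemma measurableSet_cyl (w : List (Fin m)) : MeasurableSet (Φ.cyl w) :=
  (Φ.isCompact_cyl w).isClosed.measurableSet

lemma cyl_append_subset (u v : List (Fin m)) : Φ.cyl (u ++ v) ⊆ Φ.cyl u := by
  induction u with
  | nil => simpa using Φ.cyl_subset_K v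
  | cons i u ih => rw [List.cons_append, cyl_cons, cyl_cons]; exact image_mono ih

lemma exists_mem_cyl (n : ℕ) {x : Pt d} (hx : x ∈ Φ.K) : ∃ w, w.length = n ∧ x ∈ Φ.cyl w := by
  induction n generalizing x with
  | zero => exact ⟨[], rfl, by simpa using hx⟩
  | succ n ih =>
    obtain ⟨i, y, hy, rfl⟩ := mem_iUnion.1 (Φ.K_invariant ▸ hx)
    obtain ⟨w, hw, hyw⟩ := ih hy
    exact ⟨i :: w, by simp [hw], by rw [cyl_cons]; exact mem_image_of_mem _ hyw⟩

lemma eq_of_mem_cyl {w w' : List (Fin m)} (hl : w.length = w'.length) {x : Pt d}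
    (hx : x ∈ Φ.cyl w) (hx' : x ∈ Φ.cyl w') : w = w' := by
  induction w generalizing w' x with
  | nil => exact (List.length_eq_zero_iff.1 hl.symm).symm
  | cons i w ih =>
    obtain _ | ⟨j, w'⟩ := w'
    · simp at hl
    rw [cyl_cons] at hx hx'
    obtain ⟨y, hy, rfl⟩ := hx
    obtain ⟨y', hy', hyy'⟩ := hx'
    obtain rfl : j = i := by_contra fun hij => (Φ.ssc hij).ne_of_mem
      (mem_image_of_mem _ (Φ.cyl_subset_K w' hy')) (mem_image_of_mem _ (Φ.cyl_subset_K w hy)) hyy'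
    obtain rfl := Φ.S_injective j hyy'
    rw [ih (by simpa using hl) hy hy']

lemma diam_cyl_le {ρ : ℝ≥0} (hρ : ∀ i, Φ.r i ≤ ρ) (w : List (Fin m)) :
    Metric.diam (Φ.cyl w) ≤ (ρ : ℝ) ^ w.length * Metric.diam Φ.K := by
  induction w with
  | nil => simp
  | cons i w ih =>
    rw [cyl_cons, List.length_cons, pow_succ', mul_assoc]
    calc Metric.diam (Φ.S i '' Φ.cyl w) ≤ ρ * Metric.diam (Φ.cyl w) :=
          (Φ.lipschitzWith_S (hρ i)).diam_image_le _ (Φ.isCompact_cyl w).isBounded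
      _ ≤ ρ * ((ρ : ℝ) ^ w.length * Metric.diam Φ.K) := mul_le_mul_of_nonneg_left ih ρ.coe_nonneg

lemma exists_mem_cyl_subset {U : Set (Pt d)} (hU : IsOpen U) {x : Pt d} (hxU : x ∈ U)
    (hxK : x ∈ Φ.K) : ∃ w, x ∈ Φ.cyl w ∧ Φ.cyl w ⊆ U := by
  obtain ⟨ε, hε, hball⟩ := Metric.isOpen_iff.1 hU x hxU
  obtain ⟨ρ, hρ1, hρ⟩ := Φ.exists_lt_one_forall_r_le
  have hdiam : Tendsto (fun n => (ρ : ℝ) ^ n * Metric.diam Φ.K) atTop (𝓝 0) := by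
    simpa using (tendsto_pow_atTop_nhds_zero_of_lt_one ρ.coe_nonneg hρ1).mul_const _
  obtain ⟨n, hn⟩ := (hdiam.eventually_lt_const hε).exists
  obtain ⟨w, rfl, hxw⟩ := Φ.exists_mem_cyl n hxK
  refine ⟨w, hxw, fun y hy => hball ?_⟩
  calc dist y x ≤ Metric.diam (Φ.cyl w) :=
        Metric.dist_le_diam_of_mem (Φ.isCompact_cyl w).isBounded hy hxw
    _ ≤ (ρ : ℝ) ^ w.length * Metric.diam Φ.K := Φ.diam_cyl_le hρ w
    _ < ε := hn

lemma inter_K_eq_biUnion_cyl {U : Set (Pt d)} (hU : IsOpen U) :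
    U ∩ Φ.K = ⋃ w ∈ {w | Φ.cyl w ⊆ U}, Φ.cyl w :=
  Subset.antisymm
    (fun _ ⟨hxU, hxK⟩ =>
      let ⟨_, hxw, hwU⟩ := Φ.exists_mem_cyl_subset hU hxU hxK
      mem_biUnion hwU hxw)
    (iUnion₂_subset fun w hw => subset_inter hw (Φ.cyl_subset_K w))

open Classical in
def address (n : ℕ) (x : Pt d) : Option (List (Fin m)) :=
  if h : ∃ w, w.length = n ∧ x ∈ Φ.cyl w then some h.choose else none

variable {Φ} in
lemma address_eq_some_iff {n : ℕ} {x : Pt d} {w : List (Fin m)} :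
    Φ.address n x = some w ↔ w.length = n ∧ x ∈ Φ.cyl w := by
  by_cases hex : ∃ w, w.length = n ∧ x ∈ Φ.cyl w
  · rw [address, dif_pos hex, Option.some.injEq]
    refine ⟨fun h => h ▸ hex.choose_spec, fun hw => ?_⟩
    exact Φ.eq_of_mem_cyl (hex.choose_spec.1.trans hw.1.symm) hex.choose_spec.2 hw.2
  · rw [address, dif_neg hex]
    exact iff_of_false (by simp) fun hw => hex ⟨w, hw⟩

variable {Φ} in
lemma address_eq_none_iff {n : ℕ} {x : Pt d} : Φ.address n x = none ↔ x ∉ Φ.K := by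
  refine ⟨fun h hxK => ?_, fun hxK => dif_neg fun ⟨w, _, hxw⟩ => hxK (Φ.cyl_subset_K w hxw)⟩
  obtain ⟨w, hw, hxw⟩ := Φ.exists_mem_cyl n hxK
  simp [address_eq_some_iff.2 ⟨hw, hxw⟩] at h

lemma address_eq_map_take {n k : ℕ} (h : n ≤ k) :
    Φ.address n = Option.map (List.take n) ∘ Φ.address k := by
  funext x
  rw [Function.comp_apply]
  rcases hx : Φ.address k x with _ | w
  · exact address_eq_none_iff.2 (address_eq_none_iff.1 hx)
  · obtain ⟨hw, hxw⟩ := address_eq_some_iff.1 hx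
    rw [Option.map_some, address_eq_some_iff]
    refine ⟨by simp [hw, h], Φ.cyl_append_subset _ (w.drop n) ?_⟩
    rwa [List.take_append_drop]

lemma measurableSet_address_preimage (n : ℕ) (T : Set (Option (List (Fin m)))) :
    MeasurableSet (Φ.address n ⁻¹' T) := by
  rw [← biUnion_preimage_singleton]
  refine .biUnion T.to_countable fun o _ => ?_
  rcases o with _ | w
  · have : Φ.address n ⁻¹' {none} = Φ.Kᶜ := ext fun _ => address_eq_none_iff
    exact this ▸ Φ.K_compact.measurableSet.compl
  · have : Φ.address n ⁻¹' {some w} = {x | w.length = n} ∩ Φ.cyl w :=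
      ext fun _ => address_eq_some_iff
    exact this ▸ (MeasurableSet.const _).inter (Φ.measurableSet_cyl w)

/-- `ℱ n`: its atoms are the generation-`n` cubes and `Kᶜ`, the fibres of `address n`. -/
def cylFiltration : Filtration ℕ (inferInstance : MeasurableSpace (Pt d)) where
  seq n := MeasurableSpace.comap (Φ.address n) ⊤
  mono' n k h := by
    dsimp only
    rw [Φ.address_eq_map_take h, ← MeasurableSpace.comap_comp]
    exact MeasurableSpace.comap_mono le_top
  le' n := fun _ ⟨T, _, hT⟩ => hT ▸ Φ.measurableSet_address_preimage n T

lemma measurableSet_cylFiltration_cyl {n : ℕ} {w : List (Fin m)} (hw : w.length = n) :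
    MeasurableSet[Φ.cylFiltration n] (Φ.cyl w) :=
  ⟨{some w}, trivial, ext fun _ => by simp [address_eq_some_iff, hw]⟩

lemma measurableSet_iSup_cylFiltration_inter_K {B : Set (Pt d)} (hB : MeasurableSet B) :
    MeasurableSet[⨆ n, Φ.cylFiltration n] (B ∩ Φ.K) := by
  have hcyl (w : List (Fin m)) : MeasurableSet[⨆ n, Φ.cylFiltration n] (Φ.cyl w) :=
    le_iSup (⇑Φ.cylFiltration) w.length _ (Φ.measurableSet_cylFiltration_cyl rfl)
  induction B, hB using MeasurableSet.induction_on_open with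
  | isOpen U hU =>
    rw [Φ.inter_K_eq_biUnion_cyl hU]
    exact .biUnion (to_countable _) fun w _ => hcyl w
  | compl t _ ht =>
    rw [← sdiff_eq_compl_inter, ← sdiff_inter_self_eq_sdiff]
    exact (Φ.cyl_nil ▸ hcyl []).diff ht
  | iUnion f _ _ hf =>
    rw [iUnion_inter]
    exact .iUnion hf

section SelfSimilar

variable {Φ} {p : Fin m → ℝ≥0∞} {μ : Measure (Pt d)}

lemma SelfSimilar.isProbabilityMeasure (hμ : Φ.SelfSimilar p μ) : IsProbabilityMeasure μ :=
  hμ.2.2.1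

lemma SelfSimilar.ae_mem_K (hμ : Φ.SelfSimilar p μ) : ∀ᵐ x ∂μ, x ∈ Φ.K := by
  obtain ⟨-, -, _, hK, -⟩ := hμ
  exact (prob_compl_eq_zero_iff Φ.K_compact.measurableSet).2 hK

lemma SelfSimilar.restrict_K (hμ : Φ.SelfSimilar p μ) : μ.restrict Φ.K = μ :=
  Measure.restrict_eq_self_of_ae_mem hμ.ae_mem_K

lemma SelfSimilar.mul_measure_le_measure_image (hμ : Φ.SelfSimilar p μ) (i : Fin m)
    (A : Set (Pt d)) : p i * μ A ≤ μ (Φ.S i '' A) := by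
  obtain ⟨-, -, -, -, hμ_eq⟩ := hμ
  calc p i * μ A ≤ p i * μ.map (Φ.S i) (Φ.S i '' A) := by
        gcongr p i * ?_
        exact Measure.le_map_apply_image (Φ.continuous_S i).aemeasurable A
    _ ≤ ∑ j, p j * μ.map (Φ.S j) (Φ.S i '' A) :=
        Finset.single_le_sum (f := fun j => p j * μ.map (Φ.S j) (Φ.S i '' A))
          (fun _ _ => zero_le) (Finset.mem_univ i)
    _ = μ (Φ.S i '' A) := by
        conv_rhs => rw [hμ_eq]
        simp only [Measure.finsetSum_apply, Measure.smul_apply, smul_eq_mul]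

lemma SelfSimilar.measure_cyl_pos (hμ : Φ.SelfSimilar p μ) (w : List (Fin m)) :
    0 < μ (Φ.cyl w) := by
  have ⟨_, hp, _, hK, _⟩ := hμ
  induction w with
  | nil => simp [hK]
  | cons i w ih =>
    rw [cyl_cons]
    exact (ENNReal.mul_pos (hp i).ne' ih.ne').trans_le (hμ.mul_measure_le_measure_image i _)

lemma SelfSimilar.aestronglyMeasurable_iSup_cylFiltration (hμ : Φ.SelfSimilar p μ)
    {f : Pt d → ℝ} (hf : AEStronglyMeasurable f μ) :
    AEStronglyMeasurable[⨆ n, Φ.cylFiltration n] f μ := by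
  refine ⟨Φ.K.indicator (hf.mk f), Measurable.stronglyMeasurable ?_, ?_⟩
  · refine measurable_indicator_of_measurableSet_inter ?_
      (fun _ => Φ.measurableSet_iSup_cylFiltration_inter_K) hf.stronglyMeasurable_mk.measurable
    simpa using Φ.measurableSet_iSup_cylFiltration_inter_K MeasurableSet.univ
  · filter_upwards [hf.ae_eq_mk, hμ.ae_mem_K] with x hx hxK
    rwa [indicator_of_mem hxK]

lemma SelfSimilar.condExp_cylFiltration_eq_setAverage (hμ : Φ.SelfSimilar p μ)
    {f : Pt d → ℝ} (hf : Integrable f μ) {n : ℕ} {w : List (Fin m)} (hw : w.length = n)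
    {x : Pt d} (hx : x ∈ Φ.cyl w) : μ[f | Φ.cylFiltration n] x = ⨍ y in Φ.cyl w, f y ∂μ := by
  have := hμ.isProbabilityMeasure
  have hconst : ∀ y ∈ Φ.cyl w, μ[f | Φ.cylFiltration n] y = μ[f | Φ.cylFiltration n] x :=
    fun y hy => stronglyMeasurable_condExp.measurable.factorsThrough (mY := ⊤) <| by
      rw [address_eq_some_iff.2 ⟨hw, hy⟩, address_eq_some_iff.2 ⟨hw, hx⟩]
  calc μ[f | Φ.cylFiltration n] x = ⨍ _ in Φ.cyl w, μ[f | Φ.cylFiltration n] x ∂μ :=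
        (setAverage_const (hμ.measure_cyl_pos w).ne' (measure_ne_top μ _) _).symm
    _ = ⨍ y in Φ.cyl w, μ[f | Φ.cylFiltration n] y ∂μ :=
        setAverage_congr_fun (Φ.measurableSet_cyl w) (ae_of_all _ fun y hy => (hconst y hy).symm)
    _ = ⨍ y in Φ.cyl w, f y ∂μ := by
        rw [setAverage_eq, setAverage_eq, setIntegral_condExp (Φ.cylFiltration.le n) hf
          (Φ.measurableSet_cylFiltration_cyl hw)]

theorem SelfSimilar.ae_tendsto_setAverage_cyl (hμ : Φ.SelfSimilar p μ) {f : Pt d → ℝ}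
    (hf : Integrable f μ) :
    ∀ᵐ x ∂μ, ∀ w : ℕ → List (Fin m), (∀ n, (w n).length = n ∧ x ∈ Φ.cyl (w n)) →
      Tendsto (fun n => ⨍ y in Φ.cyl (w n), f y ∂μ) atTop (𝓝 (f x)) := by
  have := hμ.isProbabilityMeasure
  have hlim : μ[f | ⨆ n, Φ.cylFiltration n] =ᵐ[μ] f :=
    condExp_of_aestronglyMeasurable' (iSup_le Φ.cylFiltration.le)
      (hμ.aestronglyMeasurable_iSup_cylFiltration hf.1) hf
  filter_upwards [tendsto_ae_condExp (ℱ := Φ.cylFiltration) f, hlim] with x hx hfx w hw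
  rw [← hfx]
  exact hx.congr fun n => hμ.condExp_cylFiltration_eq_setAverage hf (hw n).1 (hw n).2

end SelfSimilar

end IFS

/-- Lebesgue differentiation theorem on the self-similar set `K`: averages over the
generation-`n` basic cubes containing `x` converge to `f(x)` for `μ`-a.e. `x`. -/
theorem lebesgue_differentiation (d m : ℕ) (Φ : IFS d m) (p : Fin m → ℝ≥0∞)
    (μ : Measure (Pt d)) (hμ : Φ.SelfSimilar p μ)
    (f : Pt d → ℝ) (hf : IntegrableOn f Φ.K μ) :
    ∀ᵐ x ∂μ, ∀ w : ℕ → List (Fin m),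
      (∀ n, (w n).length = n ∧ x ∈ Φ.cyl (w n)) →
      Tendsto (fun n => ⨍ y in Φ.cyl (w n), f y ∂μ) atTop (𝓝 (f x)) ∧
      Tendsto (fun n => ⨍ y in Φ.cyl (w n), |f y - f x| ∂μ) atTop (𝓝 0) := by
  have := hμ.isProbabilityMeasure
  have hfμ : Integrable f μ := by rwa [IntegrableOn, hμ.restrict_K] at hf
  have hq : ∀ᵐ x ∂μ, ∀ q : ℚ, ∀ w : ℕ → List (Fin m),
      (∀ n, (w n).length = n ∧ x ∈ Φ.cyl (w n)) →
      Tendsto (fun n => ⨍ y in Φ.cyl (w n), |f y - q| ∂μ) atTop (𝓝 |f x - q|) :=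
    ae_all_iff.2 fun q => hμ.ae_tendsto_setAverage_cyl (hfμ.sub (integrable_const _)).abs
  filter_upwards [hμ.ae_tendsto_setAverage_cyl hfμ, hq] with x hx hxq w hw
  exact ⟨hx w hw, tendsto_average_abs_sub_of_forall_rat (fun _ => hfμ.restrict)
    fun q => hxq q w hw⟩
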